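/- For a bounded operator X on a reproducing kernel Hilbert space, ber(X)² ≤ ber(I + X*X) · ber(I + XX*). -/

import Mathlib

variable {E : Type*} [NormedAddCommGroup E] [InnerProductSpace ℂ E] [CompleteSpace E] {Ω : Type*}

/-- Berezin number of `A` w.r.t. the family of normalized reproducing kernels `k`. -/
noncomputable def ber (k : Ω → E) (A : E →L[ℂ] E) : ℝ :=
  ⨆ p : Ω, ‖(inner ℂ (A (k p)) (k p) : ℂ)‖

noncomputable def adj (A : E →L[ℂ] E) : E →L[ℂ] E := ContinuousLinearMap.adjoint A

/-- Real part `(T + T*)/2`. -/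
noncomputable def reOp (T : E →L[ℂ] E) : E →L[ℂ] E := (2 : ℂ)⁻¹ • (T + adj T)

/-- Imaginary part `(T - T*)/(2i)`. -/
noncomputable def imOp (T : E →L[ℂ] E) : E →L[ℂ] E := (2 * Complex.I)⁻¹ • (T - adj T)

/-- `|X| = (X*X)^{1/2}`. -/
noncomputable def absOp (X : E →L[ℂ] E) : E →L[ℂ] E := CFC.sqrt (adj X * X)


/-! Cauchy–Schwarz gives `|⟨X k̂, k̂⟩|² ≤ ‖X k̂‖² < ⟨(I + X*X) k̂, k̂⟩`, so `ber(X)² ≤ ber(I + X*X)`;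
and `⟨(I + XX*) k̂, k̂⟩ = 1 + ‖X* k̂‖² ≥ 1`, so `ber(I + XX*) ≥ 1` as soon as there is a kernel.
For empty `Ω` every Berezin number is the junk value `sSup ∅ = 0`. -/

omit [CompleteSpace E] in
lemma ber_nonneg (k : Ω → E) (A : E →L[ℂ] E) : 0 ≤ ber k A :=
  Real.iSup_nonneg fun _ => norm_nonneg _

omit [CompleteSpace E] in
lemma norm_inner_le_ber {k : Ω → E} (hk : ∀ p, ‖k p‖ = 1) (A : E →L[ℂ] E) (p : Ω) :
    ‖(inner ℂ (A (k p)) (k p) : ℂ)‖ ≤ ber k A := by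
  refine le_ciSup (f := fun p => ‖(inner ℂ (A (k p)) (k p) : ℂ)‖) ⟨‖A‖, ?_⟩ p
  rintro _ ⟨q, rfl⟩
  calc ‖(inner ℂ (A (k q)) (k q) : ℂ)‖ ≤ ‖A (k q)‖ * ‖k q‖ := norm_inner_le_norm _ _
    _ ≤ ‖A‖ * ‖k q‖ * ‖k q‖ := by gcongr; exact A.le_opNorm _
    _ = ‖A‖ := by rw [hk q, mul_one, mul_one]

lemma norm_inner_one_add_adj_mul_self (Y : E →L[ℂ] E) (x : E) :
    ‖(inner ℂ ((1 + adj Y * Y) x) x : ℂ)‖ = ‖x‖ ^ 2 + ‖Y x‖ ^ 2 := by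
  have hinner : (inner ℂ ((1 + adj Y * Y) x) x : ℂ) = ((‖x‖ ^ 2 + ‖Y x‖ ^ 2 : ℝ) : ℂ) := by
    rw [show (1 + adj Y * Y) x = x + adj Y (Y x) from rfl, inner_add_left, adj,
      ContinuousLinearMap.adjoint_inner_left, inner_self_eq_norm_sq_to_K, inner_self_eq_norm_sq_to_K]
    push_cast
    rfl
  rw [hinner, Complex.norm_of_nonneg (by positivity)]

lemma sq_ber_le_ber_one_add_adj_mul_self {k : Ω → E} (hk : ∀ p, ‖k p‖ = 1) (X : E →L[ℂ] E) :
    ber k X ^ 2 ≤ ber k (1 + adj X * X) := by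
  have hX : ber k X ≤ √(ber k (1 + adj X * X)) := by
    refine Real.iSup_le (fun p => ?_) (Real.sqrt_nonneg _)
    rw [Real.le_sqrt (norm_nonneg _) (ber_nonneg _ _)]
    calc ‖(inner ℂ (X (k p)) (k p) : ℂ)‖ ^ 2 ≤ ‖X (k p)‖ ^ 2 := by
          gcongr
          simpa [hk p] using norm_inner_le_norm (𝕜 := ℂ) (X (k p)) (k p)
      _ ≤ ‖k p‖ ^ 2 + ‖X (k p)‖ ^ 2 := le_add_of_nonneg_left (sq_nonneg _)
      _ = ‖(inner ℂ ((1 + adj X * X) (k p)) (k p) : ℂ)‖ :=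
          (norm_inner_one_add_adj_mul_self X (k p)).symm
      _ ≤ ber k (1 + adj X * X) := norm_inner_le_ber hk _ p
  calc ber k X ^ 2 ≤ √(ber k (1 + adj X * X)) ^ 2 := by gcongr; exact ber_nonneg _ _
    _ = ber k (1 + adj X * X) := Real.sq_sqrt (ber_nonneg _ _)

lemma one_le_ber_one_add_adj_mul_self [Nonempty Ω] {k : Ω → E} (hk : ∀ p, ‖k p‖ = 1)
    (Y : E →L[ℂ] E) : 1 ≤ ber k (1 + adj Y * Y) := by
  obtain ⟨p⟩ := ‹Nonempty Ω›
  calc (1 : ℝ) ≤ ‖k p‖ ^ 2 + ‖Y (k p)‖ ^ 2 := by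
        rw [hk p, one_pow]
        exact le_add_of_nonneg_right (sq_nonneg _)
    _ = ‖(inner ℂ ((1 + adj Y * Y) (k p)) (k p) : ℂ)‖ :=
        (norm_inner_one_add_adj_mul_self Y (k p)).symm
    _ ≤ ber k (1 + adj Y * Y) := norm_inner_le_ber hk _ p

theorem stmt8 (k : Ω → E) (hk : ∀ p, ‖k p‖ = 1) (X : E →L[ℂ] E) :
    (ber k X) ^ 2 ≤ ber k (1 + adj X * X) * ber k (1 + X * adj X) := by
  rcases isEmpty_or_nonempty Ω with _ | _
  · simp [ber]
  have hXadj : X * adj X = adj (adj X) * adj X := by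
    rw [adj, adj, ContinuousLinearMap.adjoint_adjoint]
  calc ber k X ^ 2 ≤ ber k (1 + adj X * X) := sq_ber_le_ber_one_add_adj_mul_self hk X
    _ ≤ ber k (1 + adj X * X) * ber k (1 + X * adj X) := by
        rw [hXadj]
        exact le_mul_of_one_le_right (ber_nonneg _ _) (one_le_ber_one_add_adj_mul_self hk (adj X))
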